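/- Hypercyclicity of unimodular multiples: Let X be a (real or complex) infinite-dimensional separable Banach space and let A be a densely defined linear operator in X such that every power A^n (n ∈ ℕ) is a closed operator, and suppose there exist a set Y ⊆ C^∞(A) dense in X and a mapping B : Y → Y such that (1) ABf = f for every f ∈ Y and (2) for every f ∈ Y, A^n f → 0 and B^n f → 0 as n → ∞. Then for every scalar λ with |λ| = 1, the operator λA (with domain D(A)) is hypercyclic. -/

import Mathlib

open Filter Topology TopologicalSpace

/-- The domain of the `n`-th power of the operator `A` with domain `D`:
`x ∈ D(Aⁿ)` iff `Aᵏx ∈ D(A)` for all `k < n`. -/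
def opDom {X : Type*} (A : X → X) (D : Set X) (n : ℕ) : Set X :=
  {x | ∀ k < n, A^[k] x ∈ D}

/-- `C^∞(A) = ⋂ₙ D(Aⁿ)`. -/
def opCinf {X : Type*} (A : X → X) (D : Set X) : Set X :=
  {x | ∀ k : ℕ, A^[k] x ∈ D}

/-- `A` is linear on the subspace `D`. -/
def IsLinearOn (𝕜 : Type*) {X : Type*} [RCLike 𝕜] [NormedAddCommGroup X]
    [NormedSpace 𝕜 X] (A : X → X) (D : Set X) : Prop :=
  (∀ x ∈ D, ∀ y ∈ D, A (x + y) = A x + A y) ∧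
  (∀ (c : 𝕜), ∀ x ∈ D, A (c • x) = c • A x)

/-- The `n`-th power of `A` (with domain `D`) is a closed operator:
its graph is closed in `X × X`. -/
def ClosedPower {X : Type*} [NormedAddCommGroup X] (A : X → X) (D : Set X)
    (n : ℕ) : Prop :=
  IsClosed {p : X × X | p.1 ∈ opDom A D n ∧ p.2 = A^[n] p.1}

/-- A hypercyclic vector for `A`: a nonzero `f ∈ C^∞(A)` with dense orbit. -/
def HypercyclicVec {X : Type*} [NormedAddCommGroup X] (A : X → X) (D : Set X)
    (f : X) : Prop :=
  f ∈ opCinf A D ∧ f ≠ 0 ∧ Dense (Set.range fun n : ℕ => A^[n] f)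

/-- `A` (with domain `D`) is hypercyclic. -/
def HypercyclicOp {X : Type*} [NormedAddCommGroup X] (A : X → X) (D : Set X) :
    Prop :=
  ∃ f, HypercyclicVec A D f

/-- `f` is a periodic point of `A`: `f ∈ D(A^N)` and `A^N f = f` for some `N ≥ 1`. -/
def PeriodicPt {X : Type*} (A : X → X) (D : Set X) (f : X) : Prop :=
  ∃ N : ℕ, 0 < N ∧ f ∈ opDom A D N ∧ A^[N] f = f

/-- `A` (with domain `D`) is chaotic: hypercyclic with a dense set of periodic
points. -/
def ChaoticOp {X : Type*} [NormedAddCommGroup X] (A : X → X) (D : Set X) : Prop :=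
  HypercyclicOp A D ∧ Dense {f | PeriodicPt A D f}

/-!
Enumerate a dense subset of `Y` as `y₀, y₁, …`, every point repeated infinitely often, and pick
times `n₀ < n₁ < ⋯` separated by large gaps. The vector `f = ∑ₖ λ^(-nₖ) B^nₖ yₖ` lies in
`C^∞(A)`, since every `A^p`-image of the series converges and the powers of `A` are closed.
Up to unimodular factors, `(λA)^nⱼ f` is `yⱼ` plus the terms `A^(nⱼ - nₖ) yₖ` (`k < j`) and
`B^(nₖ - nⱼ) yₖ` (`k > j`); the gaps bound these by `2⁻ᵏ`, and each tends to `0` as `j → ∞`, so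
dominated convergence gives `(λA)^nⱼ f - yⱼ → 0`, which makes the orbit of `f` dense.
-/

theorem ClosedPower.mem_opDom_of_tendsto {X : Type*} [NormedAddCommGroup X] {A : X → X}
    {D : Set X} {n : ℕ} (h : ClosedPower A D n) {ι : Type*} {F : Filter ι} [F.NeBot]
    {u : ι → X} {x y : X} (hu : ∀ i, u i ∈ opDom A D n) (hux : Tendsto u F (𝓝 x))
    (huy : Tendsto (fun i => A^[n] (u i)) F (𝓝 y)) : x ∈ opDom A D n ∧ A^[n] x = y := by
  have := h.mem_of_tendsto (hux.prodMk_nhds huy) (Eventually.of_forall fun i => ⟨hu i, rfl⟩)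
  exact ⟨this.1, this.2.symm⟩

theorem exists_add_add_lt_of_lt (N : ℕ → ℕ) :
    ∃ n : ℕ → ℕ, ∀ ⦃a b⦄, a < b → n a + N a + N b < n b := by
  refine ⟨fun k => ∑ i ∈ Finset.range k, (N i + N (i + 1) + 1), fun a b hab => ?_⟩
  induction b, hab using Nat.le_induction with
  | base => simp only [Nat.succ_eq_add_one, Finset.sum_range_succ]; omega
  | succ b hab ih => simp only [Finset.sum_range_succ] at ih ⊢; omega

namespace Set.LeftInvOn

variable {X : Type*} {A B : X → X} {Y : Set X}

theorem iterate (h : LeftInvOn A B Y) (hB : MapsTo B Y Y) (n : ℕ) :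
    LeftInvOn A^[n] B^[n] Y := by
  induction n with
  | zero => intro y _; rfl
  | succ n ih =>
    intro y hy
    rw [Function.iterate_succ_apply, Function.iterate_succ_apply', h (hB.iterate n hy), ih hy]

theorem iterate_apply_iterate_of_le (h : LeftInvOn A B Y) (hB : MapsTo B Y Y) {y : X}
    (hy : y ∈ Y) {m n : ℕ} (hmn : m ≤ n) : A^[m] (B^[n] y) = B^[n - m] y := by
  obtain ⟨k, rfl⟩ := Nat.exists_eq_add_of_le hmn
  rw [Function.iterate_add_apply, h.iterate hB m (hB.iterate k hy), Nat.add_sub_cancel_left]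

theorem iterate_apply_iterate_of_ge (h : LeftInvOn A B Y) (hB : MapsTo B Y Y) {y : X}
    (hy : y ∈ Y) {m n : ℕ} (hnm : n ≤ m) : A^[m] (B^[n] y) = A^[m - n] y := by
  obtain ⟨k, rfl⟩ := Nat.exists_eq_add_of_le' hnm
  rw [Function.iterate_add_apply, h.iterate hB n hy, Nat.add_sub_cancel]

theorem norm_iterate_apply_iterate_le [NormedAddCommGroup X] (h : LeftInvOn A B Y)
    (hB : MapsTo B Y Y) {y : X} (hy : y ∈ Y) {N : ℕ} {ε : ℝ}
    (hN : ∀ m ≥ N, ‖A^[m] y‖ ≤ ε ∧ ‖B^[m] y‖ ≤ ε) {m n : ℕ} (hmn : m + N ≤ n ∨ n + N ≤ m) :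
    ‖A^[m] (B^[n] y)‖ ≤ ε := by
  rcases hmn with hmn | hnm
  · rw [h.iterate_apply_iterate_of_le hB hy (by omega)]; exact (hN _ (by omega)).2
  · rw [h.iterate_apply_iterate_of_ge hB hy (by omega)]; exact (hN _ (by omega)).1

theorem tendsto_iterate_apply_iterate [NormedAddCommGroup X] (h : LeftInvOn A B Y)
    (hB : MapsTo B Y Y) {y : X} (hy : y ∈ Y) (hAy : Tendsto (A^[·] y) atTop (𝓝 0))
    {n : ℕ → ℕ} (hn : Tendsto n atTop atTop) (k : ℕ) :
    Tendsto (fun j => A^[n j] (B^[k] y)) atTop (𝓝 0) := by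
  refine (hAy.comp ((tendsto_sub_atTop_nat k).comp hn)).congr' ?_
  filter_upwards [hn.eventually_ge_atTop k] with j hj
  exact (h.iterate_apply_iterate_of_ge hB hy hj).symm

theorem exists_strictMono_norm_iterate_apply_iterate_le [NormedAddCommGroup X]
    (h : LeftInvOn A B Y) (hB : MapsTo B Y Y)
    {y : ℕ → X} (hy : ∀ k, y k ∈ Y) (hAy : ∀ k, Tendsto (A^[·] (y k)) atTop (𝓝 0))
    (hBy : ∀ k, Tendsto (B^[·] (y k)) atTop (𝓝 0)) {ε : ℕ → ℝ} (hε : ∀ k, 0 < ε k) :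
    ∃ n : ℕ → ℕ, StrictMono n ∧ ∀ j k m, j < k ∧ m ≤ n j ∨ k < j ∧ n j ≤ m →
      ‖A^[m] (B^[n k] (y k))‖ ≤ ε k := by
  have hN (k : ℕ) : ∃ N, ∀ m ≥ N, ‖A^[m] (y k)‖ ≤ ε k ∧ ‖B^[m] (y k)‖ ≤ ε k :=
    eventually_atTop.1 <|
      ((tendsto_zero_iff_norm_tendsto_zero.1 (hAy k)).eventually (ge_mem_nhds (hε k))).and
        ((tendsto_zero_iff_norm_tendsto_zero.1 (hBy k)).eventually (ge_mem_nhds (hε k)))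
  choose N hN using hN
  obtain ⟨n, hn⟩ := exists_add_add_lt_of_lt N
  refine ⟨n, fun a b hab => by have := hn hab; omega, fun j k m hjkm =>
    h.norm_iterate_apply_iterate_le hB (hy k) (hN k) ?_⟩
  rcases hjkm with ⟨hjk, hm⟩ | ⟨hkj, hm⟩
  · have := hn hjk; left; omega
  · have := hn hkj; right; omega

end Set.LeftInvOn

theorem Dense.exists_seq_frequently_dist_lt {X : Type*} [PseudoMetricSpace X]
    [SeparableSpace X] {Y : Set X} (hY : Dense Y) [Nonempty X] :
    ∃ y : ℕ → X, (∀ j, y j ∈ Y) ∧ ∀ x, ∀ ε > 0, ∃ᶠ j in atTop, dist x (y j) < ε := by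
  have : SeparableSpace Y := (IsSeparable.of_separableSpace Y).separableSpace
  have : Nonempty Y := hY.nonempty.to_subtype
  obtain ⟨u, hu⟩ := exists_dense_seq Y
  refine ⟨fun j => u j.unpair.1, fun j => (u _).2, fun x ε hε => ?_⟩
  obtain ⟨i, hi⟩ :=
    Metric.denseRange_iff.1 (hY.denseRange_val.comp hu continuous_subtype_val) x ε hε
  refine frequently_atTop.2 fun J => ⟨Nat.pair i J, Nat.right_le_pair i J, ?_⟩
  simpa [Nat.unpair_pair] using hi

theorem denseRange_of_frequently_dist_lt_of_tendsto_dist {X : Type*} [PseudoMetricSpace X]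
    {y u : ℕ → X} (hy : ∀ x, ∀ ε > 0, ∃ᶠ j in atTop, dist x (y j) < ε)
    (hu : Tendsto (fun j => dist (y j) (u j)) atTop (𝓝 0)) : DenseRange u := by
  refine Metric.denseRange_iff.2 fun x ε hε => ?_
  obtain ⟨j, hxj, hj⟩ :=
    ((hy x _ (half_pos hε)).and_eventually (hu.eventually (gt_mem_nhds (half_pos hε)))).exists
  exact ⟨j, by linarith [dist_triangle x (y j) (u j)]⟩

theorem ne_zero_of_dense_range_iterate {X : Type*} [TopologicalSpace X] [T1Space X] [Zero X]
    [Nontrivial X] {T : X → X} (hT : T 0 = 0) {f : X} (hf : Dense (Set.range fun n => T^[n] f)) :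
    f ≠ 0 := by
  rintro rfl
  obtain ⟨x, hx⟩ := exists_ne (0 : X)
  simp only [Function.iterate_fixed hT, Set.range_const, dense_iff_closure_eq,
    closure_singleton] at hf
  exact hx (hf.symm ▸ Set.mem_univ x : x ∈ ({0} : Set X))

theorem tendsto_tsum_sub_diag {X : Type*} [NormedAddCommGroup X] [CompleteSpace X]
    {F : ℕ → ℕ → X} (hF : ∀ j, Summable (F j)) {bound : ℕ → ℝ} (hbound : Summable bound)
    (hle : ∀ j k, j ≠ k → ‖F j k‖ ≤ bound k) (hlim : ∀ k, Tendsto (F · k) atTop (𝓝 0)) :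
    Tendsto (fun j => ∑' k, F j k - F j j) atTop (𝓝 0) := by
  classical
  have hsplit (j : ℕ) : ∑' k, F j k - F j j = ∑' k, if k = j then 0 else F j k := by
    rw [(hF j).tsum_eq_add_tsum_ite j, add_sub_cancel_left]
  simp only [hsplit]
  have hdom := tendsto_tsum_of_dominated_convergence
    (f := fun j k => if k = j then 0 else F j k) (g := fun _ => (0 : X)) hbound
    (fun k => (hlim k).congr' ?_) (Eventually.of_forall fun j k => ?_)
  · simpa using hdom
  · filter_upwards [eventually_ne_atTop k] with j hj
    simp [Ne.symm hj]
  · split_ifs with hkj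
    · simpa using (norm_nonneg _).trans (hle (k + 1) k (by omega))
    · exact hle j k (Ne.symm hkj)

section IterateLinear

variable {𝕜 X : Type*} [RCLike 𝕜] [NormedAddCommGroup X] [NormedSpace 𝕜 X]
  {A : X → X} {D : Submodule 𝕜 X}

namespace IsLinearOn

theorem map_zero (hA : IsLinearOn 𝕜 A D) : A 0 = 0 := by
  simpa using hA.2 0 0 D.zero_mem

theorem iterate_add (hA : IsLinearOn 𝕜 A D) {x y : X} (hx : x ∈ opCinf A D)
    (hy : y ∈ opCinf A D) (n : ℕ) : A^[n] (x + y) = A^[n] x + A^[n] y := by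
  induction n with
  | zero => rfl
  | succ n ih => simp only [Function.iterate_succ_apply', ih, hA.1 _ (hx n) _ (hy n)]

theorem iterate_smul (hA : IsLinearOn 𝕜 A D) {x : X} (hx : x ∈ opCinf A D) (c : 𝕜) (n : ℕ) :
    A^[n] (c • x) = c • A^[n] x := by
  induction n with
  | zero => rfl
  | succ n ih => simp only [Function.iterate_succ_apply', ih, hA.2 c _ (hx n)]

def opCinfSubmodule (hA : IsLinearOn 𝕜 A D) : Submodule 𝕜 X where
  carrier := opCinf A D
  zero_mem' k := by rw [Function.iterate_fixed hA.map_zero]; exact D.zero_mem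
  add_mem' hx hy k := by rw [hA.iterate_add hx hy]; exact D.add_mem (hx k) (hy k)
  smul_mem' c _ hx k := by rw [hA.iterate_smul hx]; exact D.smul_mem c (hx k)

@[simps]
def iterateₗ (hA : IsLinearOn 𝕜 A D) (n : ℕ) : hA.opCinfSubmodule →ₗ[𝕜] X where
  toFun x := A^[n] x
  map_add' x y := hA.iterate_add x.2 y.2 n
  map_smul' c x := hA.iterate_smul x.2 c n

theorem iterate_sum (hA : IsLinearOn 𝕜 A D) {ι : Type*} (s : Finset ι) {g : ι → X}
    (hg : ∀ i, g i ∈ opCinf A D) (n : ℕ) : A^[n] (∑ i ∈ s, g i) = ∑ i ∈ s, A^[n] (g i) := by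
  have := map_sum (hA.iterateₗ n) (fun i => (⟨g i, hg i⟩ : hA.opCinfSubmodule)) s
  simpa only [iterateₗ_apply, Submodule.coe_sum] using this

theorem iterate_const_smul (hA : IsLinearOn 𝕜 A D) (l : 𝕜) {x : X} (hx : x ∈ opCinf A D)
    (n : ℕ) : (fun z => l • A z)^[n] x = l ^ n • A^[n] x := by
  induction n with
  | zero => simp
  | succ n ih =>
    rw [Function.iterate_succ_apply', Function.iterate_succ_apply', ih, hA.2 _ _ (hx n),
      smul_smul, pow_succ']

theorem opCinf_subset_opCinf_const_smul (hA : IsLinearOn 𝕜 A D) (l : 𝕜) :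
    opCinf A D ⊆ opCinf (fun z => l • A z) D := fun x hx k => by
  rw [hA.iterate_const_smul l hx]; exact D.smul_mem _ (hx k)

theorem iterate_tsum (hA : IsLinearOn 𝕜 A D) (hcl : ∀ n, 0 < n → ClosedPower A D n)
    {g : ℕ → X} (hg : ∀ k, g k ∈ opCinf A D) (hs : ∀ n, Summable fun k => A^[n] (g k)) (n : ℕ) :
    (∑' k, g k) ∈ opDom A D n ∧ A^[n] (∑' k, g k) = ∑' k, A^[n] (g k) := by
  rcases n.eq_zero_or_pos with rfl | hn
  · exact ⟨fun k hk => absurd hk k.not_lt_zero, rfl⟩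
  have hpartial (m : ℕ) : ∑ k ∈ Finset.range m, g k ∈ hA.opCinfSubmodule :=
    hA.opCinfSubmodule.sum_mem fun k _ => hg k
  refine (hcl n hn).mem_opDom_of_tendsto (F := atTop) (fun m k _ => hpartial m k)
    (hs 0).hasSum.tendsto_sum_nat ?_
  simpa only [hA.iterate_sum _ hg] using (hs n).hasSum.tendsto_sum_nat

theorem exists_tendsto_iterate_const_smul_sub [CompleteSpace X] {B : X → X} {Y : Set X}
    (hA : IsLinearOn 𝕜 A D) (hcl : ∀ n, 0 < n → ClosedPower A D n) (hYsub : Y ⊆ opCinf A D)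
    (hB : Set.MapsTo B Y Y) (hAB : Set.LeftInvOn A B Y) {y : ℕ → X} (hy : ∀ k, y k ∈ Y)
    (hAy : ∀ k, Tendsto (A^[·] (y k)) atTop (𝓝 0))
    (hBy : ∀ k, Tendsto (B^[·] (y k)) atTop (𝓝 0)) {l : 𝕜} (hl : ‖l‖ = 1) :
    ∃ f ∈ opCinf A D, ∃ n : ℕ → ℕ,
      Tendsto (fun j => (fun x => l • A x)^[n j] f - y j) atTop (𝓝 0) := by
  obtain ⟨n, hmono, hn⟩ := hAB.exists_strictMono_norm_iterate_apply_iterate_le hB hy hAy hBy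
    (ε := fun k => (1 / 2) ^ k) fun k => by positivity
  have hBy' (k : ℕ) : B^[n k] (y k) ∈ opCinf A D := hYsub (hB.iterate _ (hy k))
  set g : ℕ → X := fun k => (l⁻¹) ^ n k • B^[n k] (y k)
  have hAg (p k : ℕ) : A^[p] (g k) = (l⁻¹) ^ n k • A^[p] (B^[n k] (y k)) :=
    hA.iterate_smul (hBy' k) _ p
  have hsum (p : ℕ) : Summable fun k => A^[p] (g k) := by
    refine .of_norm_bounded_eventually_nat summable_geometric_two ?_
    filter_upwards [eventually_gt_atTop p] with k hk
    simpa [hAg, norm_smul, hl] using hn p k p (Or.inl ⟨hk, hmono.id_le p⟩)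
  have hf := hA.iterate_tsum hcl (fun k => hA.opCinfSubmodule.smul_mem _ (hBy' k)) hsum
  have hfC : ∑' k, g k ∈ opCinf A D := fun p => (hf (p + 1)).1 p p.lt_succ_self
  refine ⟨∑' k, g k, hfC, n, ?_⟩
  have hdiag (j : ℕ) : l ^ n j • A^[n j] (g j) = y j := by
    have hl0 : l ≠ 0 := by simp [← norm_ne_zero_iff, hl]
    rw [hAg, hAB.iterate hB _ (hy j), smul_smul, ← mul_pow, mul_inv_cancel₀ hl0, one_pow,
      one_smul]
  have hFnorm (j k : ℕ) : ‖l ^ n j • A^[n j] (g k)‖ = ‖A^[n j] (B^[n k] (y k))‖ := by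
    simp [hAg, norm_smul, hl]
  have key := tendsto_tsum_sub_diag (F := fun j k => l ^ n j • A^[n j] (g k))
    (fun j => (hsum _).const_smul _) summable_geometric_two
    (fun j k hjk => (hFnorm j k).trans_le <| hn j k (n j) <| by
      rcases hjk.lt_or_gt with h | h
      exacts [Or.inl ⟨h, le_rfl⟩, Or.inr ⟨h, le_rfl⟩])
    (fun k => tendsto_zero_iff_norm_tendsto_zero.2 <| by
      simpa only [hFnorm] using tendsto_zero_iff_norm_tendsto_zero.1 <|
        hAB.tendsto_iterate_apply_iterate hB (hy k) (hAy k) hmono.tendsto_atTop (n k))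
  refine key.congr fun j => ?_
  rw [hA.iterate_const_smul l hfC, (hf (n j)).2, ← (hsum _).tsum_const_smul, hdiag]

end IsLinearOn

end IterateLinear

theorem hypercyclicity_of_unimodular_multiples_general
    {𝕜 X : Type*} [RCLike 𝕜] [NormedAddCommGroup X] [NormedSpace 𝕜 X]
    [CompleteSpace X] [SeparableSpace X]
    (hinfdim : ¬ FiniteDimensional 𝕜 X)
    (D : Submodule 𝕜 X) (A : X → X)
    (hlin : IsLinearOn 𝕜 A (D : Set X))
    (hcl : ∀ n : ℕ, 0 < n → ClosedPower A (D : Set X) n)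
    (Y : Set X) (hYsub : Y ⊆ opCinf A (D : Set X)) (hYdense : Dense Y)
    (B : X → X) (hBmaps : Set.MapsTo B Y Y)
    (h1 : ∀ f ∈ Y, A (B f) = f)
    (h2 : ∀ f ∈ Y, Filter.Tendsto (fun n : ℕ => A^[n] f) Filter.atTop (nhds 0) ∧
      Filter.Tendsto (fun n : ℕ => B^[n] f) Filter.atTop (nhds 0))
    :
    ∀ l : 𝕜, ‖l‖ = 1 → HypercyclicOp (fun x => l • A x) (D : Set X) := by
  intro l hl
  have : Nontrivial X := not_subsingleton_iff_nontrivial.1 fun _ => hinfdim inferInstance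
  obtain ⟨y, hyY, hy⟩ := hYdense.exists_seq_frequently_dist_lt
  obtain ⟨f, hf, n, hfn⟩ := hlin.exists_tendsto_iterate_const_smul_sub hcl hYsub hBmaps
    (fun f hf => h1 f hf) hyY (fun k => (h2 _ (hyY k)).1) (fun k => (h2 _ (hyY k)).2) hl
  have hdense : Dense (Set.range fun m => (fun x => l • A x)^[m] f) :=
    (denseRange_of_frequently_dist_lt_of_tendsto_dist hy <| by
      simpa only [dist_eq_norm', Function.comp_apply] using
        tendsto_zero_iff_norm_tendsto_zero.1 hfn).mono (Set.range_comp_subset_range n _)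
  exact ⟨f, hlin.opCinf_subset_opCinf_const_smul l hf,
    ne_zero_of_dense_range_iterate (by simp [hlin.map_zero]) hdense, hdense⟩

/-- **Hypercyclicity of unimodular multiples.** -/
theorem hypercyclicity_of_unimodular_multiples
    {𝕜 X : Type*} [RCLike 𝕜] [NormedAddCommGroup X] [NormedSpace 𝕜 X]
    [CompleteSpace X] [SeparableSpace X]
    (hinfdim : ¬ FiniteDimensional 𝕜 X)
    (D : Submodule 𝕜 X) (A : X → X)
    (hlin : IsLinearOn 𝕜 A (D : Set X))
    (hdd : Dense (D : Set X))
    (hcl : ∀ n : ℕ, 0 < n → ClosedPower A (D : Set X) n)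
    (Y : Set X) (hYsub : Y ⊆ opCinf A (D : Set X)) (hYdense : Dense Y)
    (B : X → X) (hBmaps : Set.MapsTo B Y Y)
    (h1 : ∀ f ∈ Y, A (B f) = f)
    (h2 : ∀ f ∈ Y, Filter.Tendsto (fun n : ℕ => A^[n] f) Filter.atTop (nhds 0) ∧
      Filter.Tendsto (fun n : ℕ => B^[n] f) Filter.atTop (nhds 0))
    :
    ∀ l : 𝕜, ‖l‖ = 1 → HypercyclicOp (fun x => l • A x) (D : Set X) :=
  hypercyclicity_of_unimodular_multiples_general hinfdim D A hlin hcl Y hYsub hYdense B hBmaps h1 h2
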